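/- The unique decreasingly minimal element m_ℝ of an integral base-polyhedron B can be represented as a convex combination of the decreasingly minimal elements of the associated M-convex set B ∩ ℤ^S. -/

import Mathlib

open Finset

variable {α : Type*} [Fintype α] [DecidableEq α]

def Supermodular (p : Finset α → EReal) : Prop :=
  ∀ X Y : Finset α, p X + p Y ≤ p (X ∩ Y) + p (X ∪ Y)

/-- `p` takes values in `ℤ ∪ {−∞}`. -/
def IntegerValued (p : Finset α → EReal) : Prop :=
  ∀ X : Finset α, p X = ⊥ ∨ ∃ n : ℤ, p X = ((n : ℝ) : EReal)

/-- `x` belongs to the base-polyhedron `B'(p)`: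
`x(S) = p(S)` and `x(Z) ≥ p(Z)` for every `Z ⊆ S`. -/
def memB (p : Finset α → EReal) (x : α → ℝ) : Prop :=
  ((∑ s, x s : ℝ) : EReal) = p Finset.univ ∧
    ∀ Z : Finset α, p Z ≤ ((∑ s ∈ Z, x s : ℝ) : EReal)

/-- `x` is an integral element of the base-polyhedron `B'(p)` (a member of the
M-convex set `B ∩ ℤ^S`). -/
def memBZ (p : Finset α → EReal) (x : α → ℤ) : Prop :=
  ((((∑ s, x s : ℤ) : ℝ)) : EReal) = p Finset.univ ∧
    ∀ Z : Finset α, p Z ≤ ((((∑ s ∈ Z, x s : ℤ) : ℝ)) : EReal)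

/-- Lexicographic comparison `l1 ≤_lex l2` of lists. -/
def lexLE {β : Type*} [LT β] (l1 l2 : List β) : Prop :=
  l1 = l2 ∨ List.Lex (· < ·) l1 l2

/-- The components of `x` sorted in decreasing order. -/
noncomputable def sortDescR (x : α → ℝ) : List ℝ :=
  (Multiset.sort (Finset.univ.val.map x) (· ≤ ·)).reverse

/-- The components of the integral vector `x` sorted in decreasing order. -/
def sortDescZ (x : α → ℤ) : List ℤ :=
  (Multiset.sort (Finset.univ.val.map x) (· ≤ ·)).reverse

/-- `m` is a decreasingly minimal element of the base-polyhedron `B'(p)`. -/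
def DecMinR (p : Finset α → EReal) (m : α → ℝ) : Prop :=
  memB p m ∧ ∀ y : α → ℝ, memB p y → lexLE (sortDescR m) (sortDescR y)

/-- `m` is a decreasingly minimal element of the M-convex set `B'(p) ∩ ℤ^S`. -/
def DecMinZ (p : Finset α → EReal) (m : α → ℤ) : Prop :=
  memBZ p m ∧ ∀ y : α → ℤ, memBZ p y → lexLE (sortDescZ m) (sortDescZ y)

/-!
Let `F` be the set of `x ∈ B` with `⌊m_ℝ⌋ ≤ x ≤ ⌈m_ℝ⌉` that are tight on every `m_ℝ`-tight set.
It is compact, convex and contains `m_ℝ`, so by Krein–Milman `m_ℝ` is a convex combination of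
its extreme points, and these are integral: if `x ∈ F` has a fractional coordinate, the smallest
tight set through a suitable fractional coordinate `s` has an integral `p`-value, hence contains a
second fractional coordinate `t` that no tight set separates from `s`, and shifting a little mass
between `s` and `t` in either direction stays in `F`.

Every integral `z ∈ F` is dec-min in `B ∩ ℤ^S`. The strict level sets `T = {m < m_ℝ}` are
`m_ℝ`-tight, since otherwise a small transfer from a large to a small component would stay in `B`
and be decreasingly smaller than `m_ℝ`. For integral `m` the box gives
`∑ (z s - m)⁺ = z(T) - m|T| = p(T) - m|T| ≤ ∑ (y s - m)⁺` for every `y ∈ B ∩ ℤ^S`, and these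
threshold inequalities force `z` to be decreasingly at most `y`.
-/

open Filter Topology

section Lex

variable {β : Type*} [AddCommGroup β] [LinearOrder β] [IsOrderedAddMonoid β]

theorem List.Lex.exists_sum_posPart_lt [Nontrivial β] {l₁ l₂ : List β}
    (h : List.Lex (· < ·) l₁ l₂) (hl₁ : l₁.Pairwise (· ≥ ·)) :
    ∃ m, (l₁.map fun a => (a - m)⁺).sum < (l₂.map fun a => (a - m)⁺).sum := by
  have sum_nonneg (l : List β) (m : β) : 0 ≤ (l.map fun a => (a - m)⁺).sum :=
    List.sum_nonneg fun _ h => by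
      obtain ⟨_, _, rfl⟩ := List.mem_map.mp h
      exact posPart_nonneg _
  induction h with
  | @nil a t =>
    obtain ⟨e, he⟩ := exists_zero_lt (α := β)
    refine ⟨a - e, ?_⟩
    have := sum_nonneg t (a - e)
    simp only [List.map_nil, List.sum_nil, List.map_cons, List.sum_cons, sub_sub_cancel,
      posPart_eq_self.mpr he.le]
    exact add_pos_of_pos_of_nonneg he this
  | @rel a t₁ b t₂ hab =>
    refine ⟨a, ?_⟩
    have hzero : (t₁.map fun c => (c - a)⁺).sum = 0 :=
      List.sum_eq_zero fun _ h => by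
        obtain ⟨c, hc, rfl⟩ := List.mem_map.mp h
        exact posPart_eq_zero.mpr (sub_nonpos.mpr ((List.pairwise_cons.mp hl₁).1 c hc))
    have := sum_nonneg t₂ a
    simp only [List.map_cons, List.sum_cons, sub_self, posPart_zero, hzero, add_zero]
    exact add_pos_of_pos_of_nonneg (posPart_pos (sub_pos.mpr hab)) this
  | @cons a t₁ t₂ _ ih =>
    obtain ⟨m, hm⟩ := ih (List.pairwise_cons.mp hl₁).2
    exact ⟨m, by simpa using hm⟩

theorem lexLE_of_sum_posPart_le [Nontrivial β] {l₁ l₂ : List β} (hl₂ : l₂.Pairwise (· ≥ ·))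
    (h : ∀ m, (l₁.map fun a => (a - m)⁺).sum ≤ (l₂.map fun a => (a - m)⁺).sum) :
    lexLE l₁ l₂ := by
  rcases trichotomous_of (List.Lex (· < ·)) l₁ l₂ with hlt | heq | hgt
  · exact Or.inr hlt
  · exact Or.inl heq
  · obtain ⟨m, hm⟩ := hgt.exists_sum_posPart_lt hl₂
    exact absurd (h m) hm.not_ge

end Lex

theorem lexLE_antisymm {β : Type*} [LinearOrder β] {l₁ l₂ : List β} (h₁ : lexLE l₁ l₂)
    (h₂ : lexLE l₂ l₁) : l₁ = l₂ := by
  rcases h₁ with h₁ | h₁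
  · exact h₁
  rcases h₂ with h₂ | h₂
  · exact h₂.symm
  · exact absurd h₂ (asymm h₁)

section Sorting

variable {β : Type*} [LinearOrder β]

theorem pairwise_reverse_sort (M : Multiset β) :
    (Multiset.sort M (· ≤ ·)).reverse.Pairwise (· ≥ ·) :=
  List.pairwise_reverse.mpr (Multiset.pairwise_sort M _)

theorem sum_map_reverse_sort {ι γ : Type*} [Fintype ι] [AddCommMonoid γ] (x : ι → β) (f : β → γ) :
    ((Multiset.sort (univ.val.map x) (· ≤ ·)).reverse.map f).sum = ∑ u, f (x u) := by
  rw [List.map_reverse, List.sum_reverse, ← Multiset.sum_coe, ← Multiset.map_coe,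
    Multiset.sort_eq, Multiset.map_map]
  rfl

end Sorting

theorem EReal.eq_coe_of_add_le {u v : EReal} {c d : ℝ} (hu : u ≤ c) (hv : v ≤ d)
    (h : ((c + d : ℝ) : EReal) ≤ u + v) : u = c ∧ v = d := by
  induction u using EReal.rec <;> induction v using EReal.rec <;>
    simp_all [← EReal.coe_add]
  constructor <;> linarith

omit [DecidableEq α] in
theorem memBZ_iff_memB_cast {p : Finset α → EReal} {z : α → ℤ} :
    memBZ p z ↔ memB p (fun s => (z s : ℝ)) := by
  unfold memBZ memB
  push_cast
  rfl

section SubsetSums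

variable {ι : Type*}

theorem continuous_coe_sum (Z : Finset ι) :
    Continuous fun x : ι → ℝ => ((∑ s ∈ Z, x s : ℝ) : EReal) :=
  continuous_coe_real_ereal.comp (continuous_finsetSum _ fun s _ => continuous_apply s)

theorem convex_setOf_le_coe_sum (c : EReal) (Z : Finset ι) :
    Convex ℝ {x : ι → ℝ | c ≤ ((∑ s ∈ Z, x s : ℝ) : EReal)} := by
  intro x hx y hy a b ha hb hab
  simp only [Set.mem_ofPred_eq, Pi.add_apply, Pi.smul_apply, smul_eq_mul, sum_add_distrib,
    ← mul_sum] at hx hy ⊢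
  obtain rfl : a = 1 - b := by linarith
  rcases le_total (∑ s ∈ Z, x s) (∑ s ∈ Z, y s) with h | h
  · exact hx.trans (EReal.coe_le_coe_iff.mpr (by nlinarith [mul_nonneg hb (sub_nonneg.mpr h)]))
  · exact hy.trans (EReal.coe_le_coe_iff.mpr (by nlinarith [mul_nonneg ha (sub_nonneg.mpr h)]))

theorem convex_setOf_eq_coe_sum (c : EReal) (Z : Finset ι) :
    Convex ℝ {x : ι → ℝ | c = ((∑ s ∈ Z, x s : ℝ) : EReal)} := by
  intro x hx y hy a b ha hb hab
  simp only [Set.mem_ofPred_eq, Pi.add_apply, Pi.smul_apply, smul_eq_mul, sum_add_distrib,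
    ← mul_sum] at hx hy ⊢
  rw [hx, EReal.coe_eq_coe_iff] at hy ⊢
  rw [← hy, ← add_mul, hab, one_mul]

end SubsetSums

section Tight

variable {p : Finset α → EReal} {x : α → ℝ}

def IsTight (p : Finset α → EReal) (x : α → ℝ) (Z : Finset α) : Prop :=
  p Z = ((∑ s ∈ Z, x s : ℝ) : EReal)

omit [DecidableEq α] in
theorem isTight_univ (hx : memB p x) : IsTight p x univ :=
  hx.1.symm

theorem IsTight.inter_union (hsup : Supermodular p) (hx : memB p x) {X Y : Finset α}
    (hX : IsTight p x X) (hY : IsTight p x Y) : IsTight p x (X ∩ Y) ∧ IsTight p x (X ∪ Y) := by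
  have h := hsup X Y
  rw [hX, hY, ← EReal.coe_add, ← sum_union_inter, add_comm] at h
  exact EReal.eq_coe_of_add_le (hx.2 _) (hx.2 _) h

open scoped Classical in
noncomputable def minTight (p : Finset α → EReal) (x : α → ℝ) (s : α) : Finset α :=
  ({Z | IsTight p x Z ∧ s ∈ Z} : Finset (Finset α)).inf id

theorem mem_minTight (s : α) : s ∈ minTight p x s := by
  classical
  exact inf_induction (p := (s ∈ ·)) (mem_univ s) (fun _ h₁ _ h₂ => mem_inter.mpr ⟨h₁, h₂⟩)
    fun Z hZ => (mem_filter.mp hZ).2.2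

theorem minTight_subset {s : α} {Z : Finset α} (hZ : IsTight p x Z) (hs : s ∈ Z) :
    minTight p x s ⊆ Z := by
  classical
  exact inf_le (f := id) (mem_filter.mpr ⟨mem_univ Z, hZ, hs⟩)

theorem isTight_minTight (hsup : Supermodular p) (hx : memB p x) (s : α) :
    IsTight p x (minTight p x s) := by
  classical
  exact inf_induction (p := IsTight p x) (isTight_univ hx)
    (fun _ h₁ _ h₂ => (h₁.inter_union hsup hx h₂).1) fun Z hZ => (mem_filter.mp hZ).2.1

end Tight

section Transfer

variable {ι : Type*} [DecidableEq ι] (x : ι → ℝ) {s t : ι} (ε : ℝ)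

def transfer (s t : ι) : ι → ℝ := Pi.single t 1 - Pi.single s 1

theorem sum_add_smul_transfer (Z : Finset ι) :
    ∑ u ∈ Z, (x + ε • transfer s t) u =
      ∑ u ∈ Z, x u + ε * ((if t ∈ Z then 1 else 0) - (if s ∈ Z then 1 else 0)) := by
  simp [transfer, sum_add_distrib, ← mul_sum, sum_sub_distrib, sum_pi_single']

theorem add_smul_transfer_apply_left (hst : s ≠ t) : (x + ε • transfer s t) s = x s - ε := by
  simp [transfer, hst, sub_eq_add_neg]

theorem add_smul_transfer_apply_right (hst : s ≠ t) : (x + ε • transfer s t) t = x t + ε := by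
  simp [transfer, hst.symm]

theorem add_smul_transfer_apply_of_ne {u : ι} (hus : u ≠ s) (hut : u ≠ t) :
    (x + ε • transfer s t) u = x u := by
  simp [transfer, hus, hut]

end Transfer

theorem sum_comp_add_smul_transfer_sub (x : α → ℝ) {s t : α} (ε : ℝ) (hst : s ≠ t) (g : ℝ → ℝ) :
    ∑ u, g ((x + ε • transfer s t) u) - ∑ u, g (x u) =
      (g (x s - ε) - g (x s)) + (g (x t + ε) - g (x t)) := by
  rw [← sum_sub_distrib, Fintype.sum_eq_add s t hst fun u ⟨hus, hut⟩ => by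
      rw [add_smul_transfer_apply_of_ne x ε hus hut, sub_self],
    add_smul_transfer_apply_left x ε hst, add_smul_transfer_apply_right x ε hst]

theorem eventually_memB_add_smul_transfer {p : Finset α → EReal} {x : α → ℝ} {s t : α}
    (hx : memB p x) (hst : ∀ Z, IsTight p x Z → s ∈ Z → t ∈ Z) :
    ∀ᶠ ε in 𝓝[>] (0 : ℝ), memB p (x + ε • transfer s t) := by
  have hsum (ε : ℝ) : ∑ u, (x + ε • transfer s t) u = ∑ u, x u := by
    simpa using sum_add_smul_transfer x ε univ
  refine Eventually.and (Eventually.of_forall fun ε => (hsum ε).symm ▸ hx.1) ?_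
  refine eventually_all.mpr fun Z => ?_
  by_cases hZ : IsTight p x Z
  · filter_upwards [self_mem_nhdsWithin] with ε (hε : 0 < ε)
    rw [hZ, EReal.coe_le_coe_iff, sum_add_smul_transfer]
    by_cases hs : s ∈ Z
    · simp [hs, hst Z hZ hs]
    · by_cases ht : t ∈ Z <;> simp [hs, ht, hε.le]
  · have hlt : p Z < ((∑ u ∈ Z, x u : ℝ) : EReal) := lt_of_le_of_ne (hx.2 Z) hZ
    have hcont : Continuous fun ε : ℝ => ((∑ u ∈ Z, (x + ε • transfer s t) u : ℝ) : EReal) :=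
      continuous_coe_real_ereal.comp (by fun_prop)
    filter_upwards [nhdsWithin_le_nhds ((hcont.tendsto' 0 _ (by simp)).eventually_const_lt hlt)]
      with ε hε using hε.le

section BasePolyhedron

variable {p : Finset α → EReal} {mR : α → ℝ}

theorem posPart_sub_add_posPart_add_le {a b ε m : ℝ} (hε : 0 ≤ ε) (hab : ε ≤ a - b) :
    (a - ε - m)⁺ + (b + ε - m)⁺ ≤ (a - m)⁺ + (b - m)⁺ := by
  simp only [posPart, max_def]
  split_ifs <;> linarith

omit [DecidableEq α] in
theorem DecMinR.sortDescR_eq (hmR : DecMinR p mR) {y : α → ℝ} (hy : memB p y)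
    (h : ∀ m, ∑ u, (y u - m)⁺ ≤ ∑ u, (mR u - m)⁺) : sortDescR y = sortDescR mR :=
  lexLE_antisymm (lexLE_of_sum_posPart_le (pairwise_reverse_sort _) fun m => by
      simpa only [sortDescR, sum_map_reverse_sort] using h m) (hmR.2 y hy)

theorem DecMinR.not_memB_add_smul_transfer (hmR : DecMinR p mR) {s t : α} (hst : s ≠ t)
    {ε : ℝ} (hε : 0 < ε) (hεst : ε < mR s - mR t) : ¬ memB p (mR + ε • transfer s t) := by
  -- The transfer raises no sum of positive parts, so by lex-minimality it has the sorted
  -- vector of `mR`; but it lowers the sum of squares.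
  intro hy
  have heq := hmR.sortDescR_eq hy fun m => by
    have := sum_comp_add_smul_transfer_sub mR ε hst fun a => (a - m)⁺
    have := posPart_sub_add_posPart_add_le (m := m) hε.le hεst.le
    linarith
  have hsq := congrArg (fun l => (l.map fun a => a ^ 2).sum) heq
  simp only [sortDescR, sum_map_reverse_sort] at hsq
  have := sum_comp_add_smul_transfer_sub mR ε hst fun a => a ^ 2
  nlinarith [mul_pos hε (sub_pos.mpr hεst)]

theorem DecMinR.isTight_of_forall_lt (hsup : Supermodular p) (hmR : DecMinR p mR)
    {T : Finset α} (hT : T.Nonempty) (hlt : ∀ s ∈ T, ∀ t ∉ T, mR t < mR s) :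
    IsTight p mR T := by
  have hsub : ∀ s ∈ T, minTight p mR s ⊆ T := by
    intro s hs t ht
    by_contra htT
    have hst : s ≠ t := by rintro rfl; exact htT hs
    obtain ⟨ε, hy, hε, hεst⟩ := ((eventually_memB_add_smul_transfer hmR.1
      fun Z hZ hsZ => minTight_subset hZ hsZ ht).and
        (Ioo_mem_nhdsGT (sub_pos.mpr (hlt s hs t htT)))).exists
    exact hmR.not_memB_add_smul_transfer hst hε hεst hy
  have hTeq : T.sup' hT (minTight p mR) = T :=
    le_antisymm (sup'_le hT _ hsub) fun s hs => le_sup' (minTight p mR) hs (mem_minTight s)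
  rw [← hTeq]
  exact sup'_induction hT _ (fun _ h₁ _ h₂ => (h₁.inter_union hsup hmR.1 h₂).2)
    fun s _ => isTight_minTight hsup hmR.1 s

def tightFaceBox (p : Finset α → EReal) (mR : α → ℝ) : Set (α → ℝ) :=
  {x | memB p x} ∩ Set.Icc (fun s => (⌊mR s⌋ : ℝ)) (fun s => (⌈mR s⌉ : ℝ)) ∩
    {x | ∀ Z, IsTight p mR Z → IsTight p x Z}

theorem sum_posPart_sub_le_of_mem_tightFaceBox (hsup : Supermodular p) (hmR : DecMinR p mR)
    {z y : α → ℤ} (hz : (fun s => (z s : ℝ)) ∈ tightFaceBox p mR) (hy : memBZ p y) (m : ℤ) :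
    ∑ u, (z u - m)⁺ ≤ ∑ u, (y u - m)⁺ := by
  obtain ⟨⟨-, hlo, hhi⟩, htight⟩ := hz
  set T := univ.filter fun s => (m : ℝ) < mR s
  have hzT (u : α) : (z u - m)⁺ = if u ∈ T then z u - m else 0 := by
    split_ifs with hu
    · have h₁ : m ≤ ⌊mR u⌋ := Int.le_floor.mpr (mem_filter.mp hu).2.le
      have h₂ : ⌊mR u⌋ ≤ z u := Int.cast_le.mp (hlo u)
      exact posPart_eq_self.mpr (by omega)
    · have h₁ : ⌈mR u⌉ ≤ m := Int.ceil_le.mpr (not_lt.mp fun h => hu (by simpa [T] using h))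
      have h₂ : z u ≤ ⌈mR u⌉ := Int.cast_le.mp (hhi u)
      exact posPart_eq_zero.mpr (by omega)
  have hTzy : ∑ u ∈ T, z u ≤ ∑ u ∈ T, y u := by
    rcases T.eq_empty_or_nonempty with hT | hT
    · simp [hT]
    have hTtight := htight T <| hmR.isTight_of_forall_lt hsup hT fun s hs t ht =>
      (not_lt.mp fun h => ht (by simpa [T] using h)).trans_lt (mem_filter.mp hs).2
    have hyT := hy.2 T
    rw [hTtight, EReal.coe_le_coe_iff, ← Int.cast_sum] at hyT
    exact Int.cast_le.mp hyT
  calc ∑ u, (z u - m)⁺ = ∑ u ∈ T, (z u - m) := by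
        rw [sum_congr rfl fun u _ => hzT u, sum_ite_mem, univ_inter]
    _ ≤ ∑ u ∈ T, (y u - m) := by
        rw [sum_sub_distrib, sum_sub_distrib]
        exact sub_le_sub_right hTzy _
    _ ≤ ∑ u ∈ T, (y u - m)⁺ := sum_le_sum fun u _ => le_posPart _
    _ ≤ ∑ u, (y u - m)⁺ := sum_le_univ_sum_of_nonneg fun u => posPart_nonneg _

theorem decMinZ_of_mem_tightFaceBox (hsup : Supermodular p) (hmR : DecMinR p mR) {z : α → ℤ}
    (hz : (fun s => (z s : ℝ)) ∈ tightFaceBox p mR) : DecMinZ p z :=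
  ⟨memBZ_iff_memB_cast.mpr hz.1.1, fun y hy =>
    lexLE_of_sum_posPart_le (pairwise_reverse_sort _) fun m => by
      simpa only [sortDescZ, sum_map_reverse_sort] using
        sum_posPart_sub_le_of_mem_tightFaceBox hsup hmR hz hy m⟩

omit [DecidableEq α] in
theorem isCompact_tightFaceBox : IsCompact (tightFaceBox p mR) := by
  refine isCompact_Icc.of_isClosed_subset ?_ fun x hx => hx.1.2
  simp only [tightFaceBox, memB, IsTight, Set.ofPred_and, Set.ofPred_forall]
  exact (((isClosed_eq (continuous_coe_sum univ) continuous_const).inter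
    (isClosed_iInter fun Z => isClosed_le continuous_const (continuous_coe_sum Z))).inter
      isClosed_Icc).inter
    (isClosed_iInter fun Z => isClosed_iInter fun _ => isClosed_eq continuous_const
      (continuous_coe_sum Z))

omit [DecidableEq α] in
theorem convex_tightFaceBox : Convex ℝ (tightFaceBox p mR) := by
  simp only [tightFaceBox, memB, IsTight, Set.ofPred_and, Set.ofPred_forall,
    @eq_comm EReal _ (p univ)]
  exact (((convex_setOf_eq_coe_sum _ univ).inter
    (convex_iInter fun Z => convex_setOf_le_coe_sum _ Z)).inter (convex_Icc _ _)).inter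
    (convex_iInter fun Z => convex_iInter fun _ => convex_setOf_eq_coe_sum _ Z)

omit [DecidableEq α] in
theorem mem_tightFaceBox_self (hmR : memB p mR) : mR ∈ tightFaceBox p mR :=
  ⟨⟨hmR, fun _ => Int.floor_le _, fun _ => Int.le_ceil _⟩, fun _ hZ => hZ⟩

theorem exists_frac_pair_not_separated (hsup : Supermodular p) (hint : IntegerValued p)
    {x : α → ℝ} (hx : memB p x) {s₀ : α} (hs₀ : ∀ k : ℤ, x s₀ ≠ k) :
    ∃ s t, s ≠ t ∧ (∀ k : ℤ, x s ≠ k) ∧ (∀ k : ℤ, x t ≠ k) ∧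
      ∀ Z, IsTight p x Z → (s ∈ Z ↔ t ∈ Z) := by
  classical
  set frac := univ.filter fun s => ∀ k : ℤ, x s ≠ k
  obtain ⟨s, hsfrac, hsmin⟩ :=
    frac.exists_min_image (fun s => #(minTight p x s)) ⟨s₀, by simpa [frac] using hs₀⟩
  have hs : ∀ k : ℤ, x s ≠ k := (mem_filter.mp hsfrac).2
  set F := minTight p x s
  have hF := isTight_minTight hsup hx s
  -- `x(F) = p(F)` is an integer, so `F` holds a second fractional coordinate.
  obtain ⟨t, htF, hts, ht⟩ : ∃ t ∈ F, t ≠ s ∧ ∀ k : ℤ, x t ≠ k := by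
    by_contra! hnone
    obtain ⟨n, hn⟩ := (hint F).resolve_left (hF ▸ EReal.coe_ne_bot _)
    obtain ⟨k, hk⟩ := sum_induction (s := F.erase s) x (fun r : ℝ => ∃ k : ℤ, r = k)
      (fun _ _ ⟨a, ha⟩ ⟨b, hb⟩ => ⟨a + b, by push_cast [ha, hb]; rfl⟩) ⟨0, by simp⟩
      fun u hu => hnone u (mem_erase.mp hu).2 (mem_erase.mp hu).1
    rw [hF, EReal.coe_eq_coe_iff, ← add_sum_erase F x (mem_minTight s), hk] at hn
    exact hs (n - k) (by push_cast; linarith)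
  have hFt : minTight p x t = F :=
    eq_of_subset_of_card_le (minTight_subset hF htF) (hsmin t (by simpa [frac] using ht))
  exact ⟨s, t, hts.symm, hs, ht, fun Z hZ => ⟨fun hsZ => minTight_subset hZ hsZ htF,
    fun htZ => minTight_subset hZ htZ (hFt ▸ mem_minTight s)⟩⟩

theorem eventually_add_smul_transfer_mem_tightFaceBox {x : α → ℝ} (hx : x ∈ tightFaceBox p mR)
    {s t : α} (hst : s ≠ t) (hs : ∀ k : ℤ, x s ≠ k) (ht : ∀ k : ℤ, x t ≠ k)
    (hsep : ∀ Z, IsTight p x Z → (s ∈ Z ↔ t ∈ Z)) :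
    ∀ᶠ ε in 𝓝[>] (0 : ℝ), x + ε • transfer s t ∈ tightFaceBox p mR := by
  obtain ⟨⟨hxB, hlo, hhi⟩, htight⟩ := hx
  have hbox : ∀ᶠ ε in 𝓝[>] (0 : ℝ), ∀ u, (⌊mR u⌋ : ℝ) ≤ (x + ε • transfer s t) u ∧
      (x + ε • transfer s t) u ≤ ⌈mR u⌉ := by
    refine eventually_all.mpr fun u => ?_
    by_cases hu : u = s ∨ u = t
    · have hfrac : ∀ k : ℤ, x u ≠ k := by rcases hu with rfl | rfl <;> assumption
      have hlim : Tendsto (fun ε : ℝ => (x + ε • transfer s t) u) (𝓝[>] 0) (𝓝 (x u)) :=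
        ((Continuous.tendsto' (by fun_prop) 0 _ (by simp))).mono_left nhdsWithin_le_nhds
      filter_upwards [hlim.eventually_const_lt ((hlo u).lt_of_ne fun h => hfrac _ h.symm),
        hlim.eventually_lt_const ((hhi u).lt_of_ne (hfrac _))] with ε h₁ h₂ using ⟨h₁.le, h₂.le⟩
    · exact .of_forall fun ε => by
        rw [add_smul_transfer_apply_of_ne x ε (not_or.mp hu).1 (not_or.mp hu).2]
        exact ⟨hlo u, hhi u⟩
  filter_upwards [eventually_memB_add_smul_transfer hxB fun Z hZ => (hsep Z hZ).mp, hbox]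
    with ε hB hbox
  refine ⟨⟨hB, fun u => (hbox u).1, fun u => (hbox u).2⟩, fun Z hZ => ?_⟩
  have hxZ := htight Z hZ
  rw [IsTight, sum_add_smul_transfer, if_congr (hsep Z hxZ).symm rfl rfl, sub_self, mul_zero,
    add_zero]
  exact hxZ

theorem exists_int_of_mem_extremePoints (hsup : Supermodular p) (hint : IntegerValued p)
    {x : α → ℝ} (hx : x ∈ (tightFaceBox p mR).extremePoints ℝ) :
    ∃ z : α → ℤ, x = fun s => (z s : ℝ) := by
  suffices h : ∀ s, ∃ k : ℤ, x s = k by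
    choose z hz using h
    exact ⟨z, funext hz⟩
  intro s₀
  by_contra! hs₀
  obtain ⟨s, t, hst, hs, ht, hsep⟩ := exists_frac_pair_not_separated hsup hint hx.1.1.1 hs₀
  obtain ⟨ε, hε, h₁, h₂⟩ := (eventually_mem_nhdsWithin.and
    ((eventually_add_smul_transfer_mem_tightFaceBox hx.1 hst hs ht hsep).and
      (eventually_add_smul_transfer_mem_tightFaceBox hx.1 hst.symm ht hs
        fun Z hZ => (hsep Z hZ).symm))).exists
  have hseg : x ∈ openSegment ℝ (x + ε • transfer s t) (x + ε • transfer t s) :=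
    ⟨1 / 2, 1 / 2, by norm_num, by norm_num, by norm_num, by
      rw [transfer, transfer, ← neg_sub]
      module⟩
  have hxt := congrFun ((mem_extremePoints.mp hx).2 _ h₁ _ h₂ hseg).1 t
  rw [add_smul_transfer_apply_right x ε hst] at hxt
  linarith [Set.mem_Ioi.mp hε]

theorem finite_extremePoints_tightFaceBox (hsup : Supermodular p) (hint : IntegerValued p) :
    ((tightFaceBox p mR).extremePoints ℝ).Finite := by
  refine ((Set.finite_Icc (fun s => ⌊mR s⌋) fun s => ⌈mR s⌉).image fun z s => (z s : ℝ)).subset ?_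
  intro x hx
  obtain ⟨z, rfl⟩ := exists_int_of_mem_extremePoints hsup hint hx
  obtain ⟨⟨-, hlo, hhi⟩, -⟩ := hx.1
  exact ⟨z, ⟨fun s => Int.cast_le.mp (hlo s), fun s => Int.cast_le.mp (hhi s)⟩, rfl⟩

theorem mem_convexHull_extremePoints_tightFaceBox (hsup : Supermodular p)
    (hint : IntegerValued p) (hmR : memB p mR) :
    mR ∈ convexHull ℝ ((tightFaceBox p mR).extremePoints ℝ) := by
  rw [← (finite_extremePoints_tightFaceBox hsup hint).isClosed_convexHull ℝ |>.closure_eq,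
    closure_convexHull_extremePoints isCompact_tightFaceBox convex_tightFaceBox]
  exact mem_tightFaceBox_self hmR

end BasePolyhedron

theorem decmin_convex_combination_general (p : Finset α → EReal) (hsup : Supermodular p)
    (hint : IntegerValued p) (mR : α → ℝ) (hmR : DecMinR p mR) :
    ∃ (n : ℕ) (w : Fin n → ℝ) (v : Fin n → α → ℤ),
      (∀ i, 0 ≤ w i) ∧ (∑ i, w i) = 1 ∧ (∀ i, DecMinZ p (v i)) ∧
      ∀ s : α, mR s = ∑ i, w i * ((v i s : ℤ) : ℝ) := by
  obtain ⟨ι, _, w, x, hw₀, hw₁, hx, hmR_eq⟩ := mem_convexHull_iff_exists_fintype.mp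
    (mem_convexHull_extremePoints_tightFaceBox hsup hint hmR.1)
  choose v hv using fun i => exists_int_of_mem_extremePoints hsup hint (hx i)
  let e := (Fintype.equivFin ι).symm
  refine ⟨Fintype.card ι, w ∘ e, v ∘ e, fun i => hw₀ (e i), ?_, fun i => ?_, fun s => ?_⟩
  · simpa only [Function.comp_apply, e.sum_comp w] using hw₁
  · exact decMinZ_of_mem_tightFaceBox hsup hmR (hv (e i) ▸ (hx (e i)).1)
  · rw [← hmR_eq, Finset.sum_apply, ← e.sum_comp]
    simp [hv]

/-- The unique dec-min element `m_ℝ` of an integral base-polyhedron is a convex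
combination of the dec-min elements of the associated M-convex set `B ∩ ℤ^S`. -/
theorem decmin_convex_combination (p : Finset α → EReal) (hp0 : p ∅ = 0)
    (hfin : p (Finset.univ : Finset α) ≠ ⊥) (hsup : Supermodular p)
    (hint : IntegerValued p) (mR : α → ℝ) (hmR : DecMinR p mR) :
    ∃ (n : ℕ) (w : Fin n → ℝ) (v : Fin n → α → ℤ),
      (∀ i, 0 ≤ w i) ∧ (∑ i, w i) = 1 ∧ (∀ i, DecMinZ p (v i)) ∧
      ∀ s : α, mR s = ∑ i, w i * ((v i s : ℤ) : ℝ) :=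
  decmin_convex_combination_general p hsup hint mR hmR
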